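/- Let α ∈ (0,1) be irrational and θ ∈ [0,1), and let W be the word 1 0^{c₁} 1 (a one, then c₁ zeros, then a one), where c₁ = ⌊1/α⌋. The frequency of occurrences of W in the Sturmian sequence ω(n) = χ_{[1-α,1)}(nα+θ mod 1) exists and equals 1 - c₁·α; i.e., (1/N)·#{n ∈ {0,...,N-1} : ω(n+j) = W(j) for all 0 ≤ j ≤ c₁+1} → 1 - c₁α. -/

import Mathlib

/-!
For irrational `α` the rotation `x ↦ x + α` of `ℝ/ℤ` is uniquely ergodic. Under the rotation the
Birkhoff averages of a character `fourier k`, `k ≠ 0`, get multiplied by `fourier k α ≠ 1` while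
changing only by `O(1/N)`, so they tend to `0 = ∫ fourier k`; trigonometric polynomials are dense
and the averaging functionals are uniformly Lipschitz, so this extends to all continuous functions.
By the portmanteau theorem the orbit `nα + θ mod 1` then visits every interval with frequency equal
to its length. The word `1 0^c₁ 1` starts at `n` exactly when `nα + θ mod 1` lies in
`[1 - α, 2 - (c₁ + 1)α)`, an interval of length `1 - c₁α`.
-/

open Filter

/-- The Sturmian sequence of slope `α` and phase `θ`:
`ω(n) = 1` iff `nα + θ mod 1 ∈ [1-α, 1)`, and `0` otherwise. -/
noncomputable def sturmian (α θ : ℝ) (n : ℤ) : ℕ :=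
  if 1 - α ≤ Int.fract ((n : ℝ) * α + θ) ∧ Int.fract ((n : ℝ) * α + θ) < 1 then 1 else 0

open Topology MeasureTheory Finset

section BirkhoffAverage

variable {X E 𝕜 : Type*} [RCLike 𝕜] [NormedAddCommGroup E] [NormedSpace 𝕜 E]

theorem norm_birkhoffAverage_le {f : X → X} {g : X → E} {C : ℝ} (hg : ∀ y, ‖g y‖ ≤ C)
    (n : ℕ) (x : X) : ‖birkhoffAverage 𝕜 f g n x‖ ≤ C := by
  have hC : 0 ≤ C := (norm_nonneg _).trans (hg x)
  rcases eq_or_ne n 0 with rfl | hn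
  · simpa using hC
  rw [birkhoffAverage, birkhoffSum, norm_smul, norm_inv, RCLike.norm_natCast,
    inv_mul_le_iff₀ (by positivity)]
  calc ‖∑ k ∈ range n, g (f^[k] x)‖ ≤ ∑ _k ∈ range n, C := norm_sum_le_of_le _ fun k _ ↦ hg _
    _ = n * C := by simp

variable [TopologicalSpace X] [CompactSpace X]

theorem lipschitzWith_birkhoffAverage_continuousMap (f : X → X) (n : ℕ) (x : X) :
    LipschitzWith 1 fun g : C(X, E) ↦ birkhoffAverage 𝕜 f g n x :=
  LipschitzWith.of_dist_le_mul fun g h ↦ by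
    have : birkhoffAverage 𝕜 f g n x - birkhoffAverage 𝕜 f h n x =
        birkhoffAverage 𝕜 f ⇑(g - h) n x := by
      rw [ContinuousMap.coe_sub, birkhoffAverage_sub]
      rfl
    rw [NNReal.coe_one, one_mul, dist_eq_norm, dist_eq_norm, this]
    exact norm_birkhoffAverage_le (g - h).norm_coe_le_norm n x

variable [MeasurableSpace X] [OpensMeasurableSpace X] (μ : Measure X)

theorem ContinuousMap.integrable [IsFiniteMeasure μ] (g : C(X, 𝕜)) : Integrable g μ :=
  (BoundedContinuousFunction.mkOfCompact g).integrable μ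

variable [IsProbabilityMeasure μ]

theorem lipschitzWith_integral_continuousMap :
    LipschitzWith 1 fun g : C(X, 𝕜) ↦ ∫ y, g y ∂μ :=
  LipschitzWith.of_dist_le_mul fun g h ↦ by
    rw [NNReal.coe_one, one_mul, dist_eq_norm, dist_eq_norm,
      ← integral_sub (g.integrable μ) (h.integrable μ)]
    simpa using norm_integral_le_of_norm_le_const (μ := μ)
      (.of_forall (g - h).norm_coe_le_norm)

/-- The set of continuous functions whose Birkhoff averages converge to their integral is a closed
subspace, closed because the averaging functionals are uniformly Lipschitz. -/
theorem tendsto_birkhoffAverage_integral_of_dense_span {f : X → X} {x : X} {s : Set C(X, 𝕜)}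
    (hs : (Submodule.span 𝕜 s).topologicalClosure = ⊤)
    (h : ∀ g ∈ s, Tendsto (birkhoffAverage 𝕜 f g · x) atTop (𝓝 (∫ y, g y ∂μ))) (g : C(X, 𝕜)) :
    Tendsto (birkhoffAverage 𝕜 f g · x) atTop (𝓝 (∫ y, g y ∂μ)) := by
  let S : Submodule 𝕜 C(X, 𝕜) :=
    { carrier := {g | Tendsto (birkhoffAverage 𝕜 f g · x) atTop (𝓝 (∫ y, g y ∂μ))}
      add_mem' := fun {g₁ g₂} h₁ h₂ ↦ by
        simpa [birkhoffAverage_add, integral_add (g₁.integrable μ) (g₂.integrable μ)]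
          using h₁.add h₂
      zero_mem' := by simp [birkhoffAverage, birkhoffSum]
      smul_mem' := fun c g hg ↦ by
        simpa [birkhoffAverage, birkhoffSum, integral_const_mul, Finset.mul_sum, mul_left_comm]
          using hg.const_mul c }
  have hequi : Equicontinuous fun n (g : C(X, 𝕜)) ↦ birkhoffAverage 𝕜 f g n x :=
    (LipschitzWith.uniformEquicontinuous _ 1
      fun n ↦ lipschitzWith_birkhoffAverage_continuousMap f n x).equicontinuous
  have hS : IsClosed (S : Set C(X, 𝕜)) :=
    hequi.isClosed_setOfPred_tendsto (lipschitzWith_integral_continuousMap μ).continuous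
  have hspan : Submodule.span 𝕜 s ≤ S := Submodule.span_le.mpr h
  exact Submodule.topologicalClosure_minimal _ hspan hS (hs ▸ Submodule.mem_top)

end BirkhoffAverage

section IrrationalRotation

instance : IsProbabilityMeasure (volume : Measure UnitAddCircle) :=
  ⟨UnitAddCircle.measure_univ⟩

instance {T : ℝ} [hT : Fact (0 < T)] : NullSingletonClass (volume : Measure (AddCircle T)) :=
  ⟨fun x ↦ by simpa [hT.out.le] using AddCircle.volume_closedBall T (x := x) 0⟩

theorem fourier_add_right {T : ℝ} (k : ℤ) (x y : AddCircle T) :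
    fourier k (x + y) = fourier k x * fourier k y := by
  simp only [fourier_apply, zsmul_add, AddCircle.toCircle_add, Circle.coe_mul]

/-- Translating by `T / 2 / k` negates `fourier k`, so by invariance its integral is its own
negative. -/
theorem integral_fourier_of_ne_zero {T : ℝ} [hT : Fact (0 < T)] {k : ℤ} (hk : k ≠ 0) :
    ∫ x : AddCircle T, fourier k x = 0 := by
  have h := integral_add_right_eq_self (μ := volume) (fun x : AddCircle T ↦ fourier k x)
    ((T / 2 / k : ℝ) : AddCircle T)
  simp only [fourier_add_half_inv_index hk hT.out, integral_neg] at h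
  linear_combination -h / 2

theorem fourier_coe_ne_one_of_irrational {α : ℝ} (hα : Irrational α) {k : ℤ} (hk : k ≠ 0) :
    fourier k (α : UnitAddCircle) ≠ 1 := by
  rw [fourier_apply, ne_eq, Circle.coe_eq_one, ← AddCircle.toCircle_zero (T := 1),
    (AddCircle.injective_toCircle one_ne_zero).eq_iff, ← AddCircle.coe_zsmul,
    AddCircle.coe_eq_zero_iff]
  rintro ⟨m, hm⟩
  exact (hα.intCast_mul hk).ne_int m (by simpa [zsmul_eq_mul] using hm.symm)

/-- For `k ≠ 0` the Birkhoff averages `A n` of `fourier k` satisfy `A n (x + α) = z * A n x` with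
`z = fourier k α ≠ 1`, while `A n (x + α) - A n x → 0`; hence `A n x → 0`. -/
theorem tendsto_birkhoffAverage_fourier {α : ℝ} (hα : Irrational α) (k : ℤ) (x : UnitAddCircle) :
    Tendsto (birkhoffAverage ℂ (· + (α : UnitAddCircle)) (fourier k) · x) atTop
      (𝓝 (∫ y : UnitAddCircle, fourier k y)) := by
  set f : UnitAddCircle → UnitAddCircle := (· + (α : UnitAddCircle))
  rcases eq_or_ne k 0 with rfl | hk
  · have hconst : ⇑(fourier 0 : C(UnitAddCircle, ℂ)) ∘ f = fourier 0 := by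
      ext; simp
    refine tendsto_const_nhds.congr' ((eventually_ne_atTop 0).mono fun n hn ↦ ?_)
    simp [birkhoffAverage_of_comp_eq ℂ hconst (Nat.cast_ne_zero.mpr hn)]
  set z := fourier k (α : UnitAddCircle)
  have hshift (n : ℕ) : birkhoffAverage ℂ f (fourier k) n (f x) =
      z * birkhoffAverage ℂ f (fourier k) n x := by
    simp only [birkhoffAverage, birkhoffSum, f, add_right_iterate, smul_eq_mul, Finset.mul_sum]
    refine Finset.sum_congr rfl fun i _ ↦ ?_
    rw [add_right_comm, fourier_add_right]
    ring
  have hbdd : Bornology.IsBounded (Set.range (fourier k : UnitAddCircle → ℂ)) :=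
    (isCompact_range (fourier k).continuous).isBounded
  have hlim := tendsto_birkhoffAverage_apply_sub_birkhoffAverage' ℂ hbdd f x
  simp only [hshift, ← sub_one_mul] at hlim
  have hz : z - 1 ≠ 0 := sub_ne_zero.mpr (fourier_coe_ne_one_of_irrational hα hk)
  rw [integral_fourier_of_ne_zero hk]
  simpa [hz] using hlim.const_mul (z - 1)⁻¹

theorem tendsto_birkhoffAverage_add_irrational {α : ℝ} (hα : Irrational α)
    (g : C(UnitAddCircle, ℂ)) (x : UnitAddCircle) :
    Tendsto (birkhoffAverage ℂ (· + (α : UnitAddCircle)) g · x) atTop (𝓝 (∫ y, g y)) :=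
  tendsto_birkhoffAverage_integral_of_dense_span volume span_fourier_closure_eq_top
    (by rintro _ ⟨k, rfl⟩; exact tendsto_birkhoffAverage_fourier hα k x) g

end IrrationalRotation

section OrbitMeasure

open scoped ENNReal BoundedContinuousFunction

variable {X : Type*} [MeasurableSpace X]

noncomputable def orbitMeasure (f : X → X) (x : X) (n : ℕ) : Measure X :=
  (n : ℝ≥0∞)⁻¹ • ∑ k ∈ range n, Measure.dirac (f^[k] x)

theorem isProbabilityMeasure_orbitMeasure (f : X → X) (x : X) {n : ℕ} (hn : n ≠ 0) :
    IsProbabilityMeasure (orbitMeasure f x n) :=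
  ⟨by simp [orbitMeasure, ENNReal.inv_mul_cancel (Nat.cast_ne_zero.mpr hn)]⟩

variable [MeasurableSingletonClass X]

open scoped Classical in
theorem orbitMeasure_apply (f : X → X) (x : X) (n : ℕ) (s : Set X) :
    orbitMeasure f x n s = (n : ℝ≥0∞)⁻¹ * #{k ∈ range n | f^[k] x ∈ s} := by
  simp [orbitMeasure, Measure.dirac_apply, Set.indicator_apply]

theorem integral_orbitMeasure {E : Type*} [NormedAddCommGroup E] [NormedSpace ℝ E]
    [CompleteSpace E] (f : X → X) (x : X) (n : ℕ) (g : X → E) :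
    ∫ y, g y ∂(orbitMeasure f x n) = birkhoffAverage ℝ f g n x := by
  rw [orbitMeasure, integral_smul_measure, integral_finsetSum_measure
    fun k _ ↦ integrable_dirac enorm_lt_top]
  simp [birkhoffAverage, birkhoffSum]

variable [TopologicalSpace X] [OpensMeasurableSpace X] [HasOuterApproxClosed X]

open scoped Classical in
/-- Portmanteau: convergence of Birkhoff averages of all bounded continuous functions is weak
convergence of the orbit measures, which gives convergence of the measures of `μ`-continuity
sets. -/
theorem tendsto_card_filter_iterate_mem_div {μ : Measure X} [IsProbabilityMeasure μ]
    {f : X → X} {x : X}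
    (h : ∀ g : X →ᵇ ℂ, Tendsto (birkhoffAverage ℂ f g · x) atTop (𝓝 (∫ y, g y ∂μ)))
    {s : Set X} (hs : μ (frontier s) = 0) :
    Tendsto (fun n : ℕ ↦ (#{k ∈ range n | f^[k] x ∈ s} : ℝ) / n) atTop (𝓝 (μ.real s)) := by
  let ν (n : ℕ) : ProbabilityMeasure X :=
    ⟨orbitMeasure f x (n + 1), isProbabilityMeasure_orbitMeasure f x n.succ_ne_zero⟩
  have hν : Tendsto ν atTop (𝓝 (⟨μ, ‹_›⟩ : ProbabilityMeasure X)) := by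
    refine (ProbabilityMeasure.tendsto_iff_forall_integral_rclike_tendsto ℂ).mpr fun g ↦ ?_
    simpa [ν, integral_orbitMeasure, birkhoffAverage_congr_ring' ℝ ℂ, Function.comp_def]
      using (h g).comp (tendsto_add_atTop_nat 1)
  have hmeas := ProbabilityMeasure.tendsto_measure_of_null_frontier_of_tendsto' hν hs
  rw [← tendsto_add_atTop_iff_nat 1]
  convert (ENNReal.tendsto_toReal (measure_ne_top μ s)).comp hmeas using 1
  · ext n
    simp only [ν, orbitMeasure_apply, Function.comp_apply, ProbabilityMeasure.coe_mk]
    rw [ENNReal.toReal_mul, ENNReal.toReal_inv, ENNReal.toReal_natCast, ENNReal.toReal_natCast,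
      div_eq_inv_mul]
  · rfl

end OrbitMeasure

section Arc

theorem coe_mem_image_coe_iff_fract_mem {s : Set ℝ} (hs : s ⊆ Set.Ico 0 1) (y : ℝ) :
    (y : UnitAddCircle) ∈ ((↑) : ℝ → UnitAddCircle) '' s ↔ Int.fract y ∈ s := by
  refine ⟨?_, fun h ↦ ⟨_, h, AddCircle.coe_fract y⟩⟩
  rintro ⟨z, hz, hzy⟩
  rw [← AddCircle.coe_fract y,
    AddCircle.coe_eq_coe_iff_of_mem_Ico (p := (1 : ℝ)) (a := 0) (by simpa using hs hz)
    (by simp [Int.fract_nonneg, Int.fract_lt_one])] at hzy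
  exact hzy ▸ hz

theorem volume_image_coe_of_subset_Ico {s : Set ℝ} (hs : s ⊆ Set.Ico 0 1)
    (hm : MeasurableSet s) : volume (((↑) : ℝ → UnitAddCircle) '' s) = volume s := by
  have hpre : ((↑) : ℝ → UnitAddCircle) ⁻¹' ((↑) '' s) = Int.fract ⁻¹' s :=
    Set.ext (coe_mem_image_coe_iff_fract_mem hs)
  have hE : MeasurableSet (((↑) : ℝ → UnitAddCircle) '' s) :=
    measurableSet_quotient.mpr (by simpa [hpre] using measurable_fract hm)
  rw [AddCircle.add_projection_respects_measure 1 0 hE, hpre, zero_add,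
    measure_congr ((ae_eq_refl _).inter Ico_ae_eq_Ioc.symm)]
  congr 1
  ext y
  refine ⟨fun ⟨hy, hy01⟩ ↦ Int.fract_eq_self.mpr hy01 ▸ hy, fun hy ↦ ⟨?_, hs hy⟩⟩
  rwa [Set.mem_preimage, Int.fract_eq_self.mpr (hs hy)]

/-- `↑` maps `Ioo a b` onto an open set and `Icc a b` onto a closed one. -/
theorem frontier_image_coe_Ico_subset (T a b : ℝ) :
    frontier (((↑) : ℝ → AddCircle T) '' Set.Ico a b) ⊆ {(a : AddCircle T), (b : AddCircle T)} := by
  have hclosure : closure (((↑) : ℝ → AddCircle T) '' Set.Ico a b) ⊆ (↑) '' Set.Icc a b :=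
    closure_minimal (Set.image_mono Set.Ico_subset_Icc_self)
      (isCompact_Icc.image (AddCircle.continuous_mk' T)).isClosed
  have hinterior : (↑) '' Set.Ioo a b ⊆ interior (((↑) : ℝ → AddCircle T) '' Set.Ico a b) :=
    interior_maximal (Set.image_mono Set.Ioo_subset_Ico_self)
      (QuotientAddGroup.isOpenMap_coe _ isOpen_Ioo)
  have hends : Set.Icc a b ⊆ Set.Ioo a b ∪ {a, b} := fun y ⟨h1, h2⟩ ↦ by
    rcases h1.eq_or_lt with rfl | h1
    · simp
    rcases h2.eq_or_lt with rfl | h2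
    · simp
    exact Or.inl ⟨h1, h2⟩
  calc frontier (((↑) : ℝ → AddCircle T) '' Set.Ico a b)
      ⊆ (↑) '' Set.Icc a b \ (↑) '' Set.Ioo a b := Set.sdiff_subset_sdiff hclosure hinterior
    _ ⊆ (↑) '' {a, b} := by
      rw [Set.sdiff_subset_iff, ← Set.image_union]
      exact Set.image_mono hends
    _ = {(a : AddCircle T), (b : AddCircle T)} := Set.image_pair _ _ _

open scoped Classical in
theorem tendsto_card_filter_fract_mem_Ico_div {α : ℝ} (hα : Irrational α) (θ : ℝ) {a b : ℝ}
    (ha : 0 ≤ a) (hab : a ≤ b) (hb : b ≤ 1) :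
    Tendsto (fun N : ℕ ↦
      (((range N).filter fun n : ℕ ↦ Int.fract (n * α + θ) ∈ Set.Ico a b).card : ℝ) / N)
      atTop (𝓝 (b - a)) := by
  have hs : Set.Ico a b ⊆ Set.Ico 0 1 := Set.Ico_subset_Ico ha hb
  have hfrontier : volume (frontier (((↑) : ℝ → UnitAddCircle) '' Set.Ico a b)) = 0 :=
    measure_mono_null (frontier_image_coe_Ico_subset 1 a b) ((Set.toFinite _).measure_zero _)
  have key := tendsto_card_filter_iterate_mem_div (μ := volume) (x := (θ : UnitAddCircle))
    (fun g ↦ tendsto_birkhoffAverage_add_irrational hα g.toContinuousMap θ) hfrontier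
  have horbit (n : ℕ) : (· + (α : UnitAddCircle))^[n] θ = ((n * α + θ : ℝ) : UnitAddCircle) := by
    rw [add_right_iterate, AddCircle.coe_add, ← AddCircle.coe_nsmul, nsmul_eq_mul, add_comm]
  simp only [horbit, coe_mem_image_coe_iff_fract_mem hs, Measure.real,
    volume_image_coe_of_subset_Ico hs measurableSet_Ico, Real.volume_Ico,
    ENNReal.toReal_ofReal (sub_nonneg.mpr hab)] at key
  exact key

end Arc

section Sturmian

theorem sturmian_eq_one_iff (α θ : ℝ) (m : ℤ) :
    sturmian α θ m = 1 ↔ 1 - α ≤ Int.fract (m * α + θ) := by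
  simp [sturmian, Int.fract_lt_one]

theorem sturmian_eq_zero_iff (α θ : ℝ) (m : ℤ) :
    sturmian α θ m = 0 ↔ Int.fract (m * α + θ) < 1 - α := by
  simp [sturmian, Int.fract_lt_one, lt_sub_iff_add_lt]

theorem fract_add_eq_fract_add_sub_one {y t : ℝ} (h1 : 1 ≤ Int.fract y + t)
    (h2 : Int.fract y + t < 2) : Int.fract (y + t) = Int.fract y + t - 1 := by
  rw [Int.fract_eq_iff]
  refine ⟨by linarith, by linarith, ⌊y⌋ + 1, ?_⟩
  rw [Int.fract]
  push_cast
  ring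

/-- Once the orbit `y + jα mod 1` enters `[1 - α, 1)` it leaves it and moves up in steps of `α`,
so the next visit happens after exactly `c + 1` steps iff `fract y < 2 - (c + 1)α`; otherwise it
happens at `j = ⌈(2 - α - fract y) / α⌉ ≤ c`. -/
theorem one_zeros_one_iff_fract_mem_Ico {α : ℝ} {c : ℕ} (hα1 : α < 1) (hc : c * α < 1)
    (hc' : 1 < (c + 1) * α) (y : ℝ) :
    (1 - α ≤ Int.fract y ∧ (∀ j : ℕ, 1 ≤ j → j ≤ c → Int.fract (y + j * α) < 1 - α) ∧
      1 - α ≤ Int.fract (y + (c + 1) * α)) ↔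
    Int.fract y ∈ Set.Ico (1 - α) (2 - (c + 1) * α) := by
  have hα : 0 < α := by linarith
  have hx0 := Int.fract_nonneg y
  have hx1 := Int.fract_lt_one y
  constructor
  · rintro ⟨hfirst, hzeros, -⟩
    refine ⟨hfirst, ?_⟩
    by_contra! hx
    set j := ⌈(2 - α - Int.fract y) / α⌉₊
    have hjlow : 2 - α - Int.fract y ≤ j * α := (div_le_iff₀ hα).mp (Nat.le_ceil _)
    have hceil : (j : ℝ) < (2 - α - Int.fract y) / α + 1 :=
      Nat.ceil_lt_add_one (div_pos (by linarith) hα).le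
    have hjhigh : (j - 1) * α < 2 - α - Int.fract y := (lt_div_iff₀ hα).mp (by linarith)
    have hj1 : 1 ≤ j := Nat.one_le_iff_ne_zero.mpr fun h ↦ by simp [h] at hjlow; linarith
    have hjc : j ≤ c := Nat.ceil_le.mpr ((div_le_iff₀ hα).mpr (by linarith))
    have := hzeros j hj1 hjc
    rw [fract_add_eq_fract_add_sub_one (by linarith) (by linarith)] at this
    linarith
  · rintro ⟨hfirst, hlast⟩
    refine ⟨hfirst, fun j hj1 hjc ↦ ?_, ?_⟩
    · have hj1' : (1 : ℝ) ≤ j := by exact_mod_cast hj1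
      have hjc' : (j : ℝ) ≤ c := by exact_mod_cast hjc
      rw [fract_add_eq_fract_add_sub_one (by nlinarith) (by nlinarith)]
      nlinarith
    · rw [fract_add_eq_fract_add_sub_one (by nlinarith) (by linarith)]
      nlinarith

end Sturmian

open scoped Classical in
theorem stmt_7_general (α θ : ℝ) (hirr : Irrational α) (h0 : 0 < α) (h1 : α < 1)
    (c₁ : ℕ) (hc₁ : c₁ = ⌊1 / α⌋₊) :
    Tendsto
      (fun N : ℕ =>
        (((Finset.range N).filter (fun n : ℕ =>
            sturmian α θ (n : ℤ) = 1 ∧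
            (∀ j : ℕ, 1 ≤ j → j ≤ c₁ → sturmian α θ ((n : ℤ) + j) = 0) ∧
            sturmian α θ ((n : ℤ) + c₁ + 1) = 1)).card : ℝ) / N)
      atTop (nhds (1 - (c₁ : ℝ) * α)) := by
  have hc₁0 : c₁ ≠ 0 := by
    rw [hc₁]
    exact (Nat.floor_pos.mpr ((one_le_div h0).mpr h1.le)).ne'
  have hc : (c₁ : ℝ) * α < 1 := by
    refine lt_of_le_of_ne ?_ (by simpa using (hirr.natCast_mul hc₁0).ne_nat 1)
    rw [← le_div_iff₀ h0, hc₁]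
    exact Nat.floor_le (by positivity)
  have hc' : 1 < ((c₁ : ℝ) + 1) * α := by
    rw [← div_lt_iff₀ h0, hc₁]
    exact Nat.lt_floor_add_one _
  have hcount := tendsto_card_filter_fract_mem_Ico_div hirr θ
    (a := 1 - α) (b := 2 - (c₁ + 1) * α) (by linarith) (by linarith) (by linarith)
  rw [show (1 : ℝ) - c₁ * α = 2 - (c₁ + 1) * α - (1 - α) by ring]
  refine hcount.congr fun N ↦ ?_
  congr 3
  refine Finset.filter_congr fun n _ ↦ ?_
  rw [← one_zeros_one_iff_fract_mem_Ico h1 hc hc']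
  simp only [sturmian_eq_one_iff, sturmian_eq_zero_iff]
  push_cast
  ring_nf

open scoped Classical in
/-- The frequency of the word `W = 1 0^{c₁} 1` in the Sturmian sequence of slope `α`
exists and equals `1 - c₁·α`, where `c₁ = ⌊1/α⌋`. -/
theorem stmt_7 (α θ : ℝ) (hirr : Irrational α) (h0 : 0 < α) (h1 : α < 1)
    (hθ : θ ∈ Set.Ico (0 : ℝ) 1) (c₁ : ℕ) (hc₁ : c₁ = ⌊1 / α⌋₊) :
    Tendsto
      (fun N : ℕ =>
        (((Finset.range N).filter (fun n : ℕ =>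
            sturmian α θ (n : ℤ) = 1 ∧
            (∀ j : ℕ, 1 ≤ j → j ≤ c₁ → sturmian α θ ((n : ℤ) + j) = 0) ∧
            sturmian α θ ((n : ℤ) + c₁ + 1) = 1)).card : ℝ) / N)
      atTop (nhds (1 - (c₁ : ℝ) * α)) :=
  stmt_7_general α θ hirr h0 h1 c₁ hc₁
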